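/- Let n ≥ 1, α ∈ (0,1), θ ≥ 2, C > 0, and let u : B_{1/2}(0)×(−1/4,0] → ℝ be continuous. Suppose that for every (x₀,t₀) ∈ B_{1/4}(0)×(−1/16,0] and every r ∈ (0,1/4] there exists a vector V = V(x₀,t₀,r) ∈ ℝⁿ such that |u(x,t) − u(x₀,t₀) − V·(x−x₀)| ≤ C r^{1+α} whenever |x−x₀| ≤ r and t₀ − r^θ ≤ t ≤ t₀. Then u is differentiable in the space variable at every point of B_{1/4}(0)×(−1/16,0], and there exists C′ = C′(n,α,θ,C) > 0 such that for all (x,t),(y,s) ∈ B_{1/4}(0)×(−1/16,0] one has |Du(x,t) − Du(y,s)| ≤ C′(|x−y|^α + |t−s|^{α/θ}). -/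

import Mathlib

/-!
Two slopes `V`, `W` that both approximate `u` at the points `(x + e, t)`, `‖e‖ = s`, satisfy
`s ‖V - W‖ ≤` the sum of the approximation errors (test against `e` parallel to `V - W`). For
the slopes of one point at scales `s ≤ r ≤ 2s` this gives `‖V(z, r) - V(z, s)‖ ≲ C r^α`;
summing over dyadic scales, `V(z, r)` converges as `r → 0` to a vector `Du(z)` with
`‖V(z, r) - Du(z)‖ ≲ C r^α`, which is therefore the spatial gradient. The same comparison
between two points at parabolic distance `≲ r` gives `‖Du(z) - Du(w)‖ ≲ C r^α`: taking `r`
equal to that distance settles nearby points, and a chain of boundedly many such steps along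
the segment from `z` to `w` settles the remaining ones.
-/

open Set Real RealInnerProductSpace

noncomputable section

/-- `ℝⁿ` with the Euclidean structure. -/
abbrev En (n : ℕ) : Type := EuclideanSpace ℝ (Fin n)

/-- The set `B_r(0) × (-s, 0] ⊂ ℝⁿ × ℝ`. -/
def hCyl (n : ℕ) (r s : ℝ) : Set (En n × ℝ) :=
  {z | ‖z.1‖ < r ∧ z.2 ∈ Set.Ioc (-s) (0 : ℝ)}

open Topology

section InnerProductSpace

variable {E : Type*} [NormedAddCommGroup E] [InnerProductSpace ℝ E]

theorem mul_norm_le_of_forall_norm_eq (W : E) {ρ A : ℝ} (hρ : 0 ≤ ρ) (hA : 0 ≤ A)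
    (h : ∀ e : E, ‖e‖ = ρ → |⟪W, e⟫| ≤ A) : ρ * ‖W‖ ≤ A := by
  rcases eq_or_ne W 0 with rfl | hW
  · simpa using hA
  have hW : 0 < ‖W‖ := norm_pos_iff.mpr hW
  have he : ‖(ρ / ‖W‖) • W‖ = ρ := by
    rw [norm_smul, Real.norm_of_nonneg (by positivity), div_mul_cancel₀ _ hW.ne']
  have hinner : ⟪W, (ρ / ‖W‖) • W⟫ = ρ * ‖W‖ := by
    rw [real_inner_smul_right, real_inner_self_eq_norm_sq]
    field_simp
  simpa [hinner, abs_of_nonneg (mul_nonneg hρ hW.le)] using h _ he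

theorem hasGradientAt_of_forall_approx [CompleteSpace E] {f : E → ℝ} {x₀ G : E} {V : ℝ → E}
    {A B α R : ℝ} (hα : 0 < α) (hR : 0 < R)
    (happ : ∀ r ∈ Ioc 0 R, ∀ x, ‖x - x₀‖ ≤ r →
      |f x - f x₀ - ⟪V r, x - x₀⟫| ≤ A * r ^ (1 + α))
    (hG : ∀ r ∈ Ioc 0 R, ‖V r - G‖ ≤ B * r ^ α) :
    HasGradientAt f G x₀ := by
  rw [hasGradientAt_iff_isLittleO, Asymptotics.isLittleO_iff]
  intro c hc
  have hsmall : Filter.Tendsto (fun x => (A + B) * ‖x - x₀‖ ^ α) (𝓝 x₀) (𝓝 0) := by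
    simpa [Real.zero_rpow hα.ne'] using
      ((tendsto_norm_sub_self x₀).rpow_const (Or.inr hα.le)).const_mul (A + B)
  filter_upwards [hsmall.eventually (gt_mem_nhds hc), Metric.ball_mem_nhds x₀ hR]
    with x hxc hxR
  rcases eq_or_ne x x₀ with rfl | hne
  · simp
  set r := ‖x - x₀‖
  have hr : 0 < r := norm_pos_iff.mpr (sub_ne_zero.mpr hne)
  have hrR : r ∈ Ioc 0 R := ⟨hr, (mem_ball_iff_norm.mp hxR).le⟩
  have hcs : |⟪V r - G, x - x₀⟫| ≤ B * r ^ α * r :=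
    (abs_real_inner_le_norm _ _).trans (mul_le_mul_of_nonneg_right (hG r hrR) hr.le)
  have hsplit : ⟪G, x - x₀⟫ = ⟪V r, x - x₀⟫ - ⟪V r - G, x - x₀⟫ := by
    rw [inner_sub_left]; ring
  have happ : |f x - f x₀ - ⟪V r, x - x₀⟫| ≤ A * (r ^ α * r) := by
    simpa only [Real.rpow_add hr, Real.rpow_one, mul_comm r (r ^ α)] using happ r hrR x le_rfl
  calc ‖f x - f x₀ - ⟪G, x - x₀⟫‖
        = |(f x - f x₀ - ⟪V r, x - x₀⟫) + ⟪V r - G, x - x₀⟫| := by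
          rw [Real.norm_eq_abs, hsplit]; ring_nf
    _ ≤ |f x - f x₀ - ⟪V r, x - x₀⟫| + |⟪V r - G, x - x₀⟫| := abs_add_le _ _
    _ ≤ (A + B) * r ^ α * r := by linarith
    _ ≤ c * ‖x - x₀‖ := mul_le_mul_of_nonneg_right hxc.le hr.le

end InnerProductSpace

section Scales

variable {F : Type*} [NormedAddCommGroup F]

theorem norm_sub_le_of_norm_sub_le_of_le_two_mul {V : ℝ → F} {A α R : ℝ} (hα : 0 < α)
    (hA : 0 ≤ A) (h : ∀ r s, 0 < s → s ≤ r → r ≤ 2 * s → r ≤ R → ‖V r - V s‖ ≤ A * r ^ α)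
    {r s : ℝ} (hs : 0 < s) (hsr : s ≤ r) (hrR : r ≤ R) :
    ‖V r - V s‖ ≤ A * r ^ α / (1 - (1 / 2 : ℝ) ^ α) := by
  set q := (1 / 2 : ℝ) ^ α
  have hq : 0 < 1 - q := sub_pos.mpr (Real.rpow_lt_one (by norm_num) (by norm_num) hα)
  suffices key : ∀ k : ℕ, ∀ r, s ≤ r → r ≤ 2 ^ k * s → r ≤ R →
      ‖V r - V s‖ ≤ A * r ^ α / (1 - q) by
    obtain ⟨k, hk⟩ := pow_unbounded_of_one_lt (r / s) (by norm_num : (1 : ℝ) < 2)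
    exact key k r hsr ((div_lt_iff₀ hs).mp hk).le hrR
  intro k
  induction k with
  | zero =>
    intro r hsr hr _
    rw [pow_zero, one_mul] at hr
    rw [le_antisymm hr hsr, sub_self, norm_zero]
    positivity
  | succ k ih =>
    intro r hsr hr hrR
    have hr0 : 0 < r := hs.trans_le hsr
    by_cases h2 : r ≤ 2 * s
    · exact (h r s hs hsr h2 hrR).trans
        (le_div_self (by positivity) hq (sub_le_self _ (by positivity)))
    have hhalf : (r / 2) ^ α = q * r ^ α := by
      rw [div_eq_mul_one_div r, Real.mul_rpow hr0.le (by norm_num), mul_comm]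
    calc ‖V r - V s‖ ≤ ‖V r - V (r / 2)‖ + ‖V (r / 2) - V s‖ :=
          norm_sub_le_norm_sub_add_norm_sub _ _ _
      _ ≤ A * r ^ α + A * (r / 2) ^ α / (1 - q) := by
          gcongr
          · exact h r (r / 2) (by positivity) (by linarith) (by linarith) hrR
          · exact ih (r / 2) (by linarith) (by rw [pow_succ] at hr; linarith) (by linarith)
      _ = A * r ^ α / (1 - q) := by
          rw [hhalf]; field_simp; ring

theorem exists_norm_sub_le_of_norm_sub_le [CompleteSpace F] {V : ℝ → F} {B α R : ℝ}
    (hα : 0 < α) (hR : 0 < R) (h : ∀ r s, 0 < s → s ≤ r → r ≤ R → ‖V r - V s‖ ≤ B * r ^ α) :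
    ∃ G, ∀ r ∈ Ioc 0 R, ‖V r - G‖ ≤ B * r ^ α := by
  set s : ℕ → ℝ := fun k => R / ((k : ℝ) + 1)
  have hs0 : ∀ k, 0 < s k := fun k => by positivity
  have hsR : ∀ k, s k ≤ R := fun k =>
    div_le_self hR.le (by linarith [k.cast_nonneg (α := ℝ)])
  have hanti : Antitone s := fun k l hkl => by
    simp only [s]; gcongr
  have hlim : Filter.Tendsto s Filter.atTop (𝓝 0) := by
    simpa [s, Function.comp_def] using
      (tendsto_const_div_atTop_nhds_zero_nat R).comp (Filter.tendsto_add_atTop_nat 1)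
  have hcauchy : CauchySeq (V ∘ s) := by
    refine cauchySeq_of_le_tendsto_0 (fun N => 2 * (B * s N ^ α)) (fun m l N hm hl => ?_) ?_
    · calc dist (V (s m)) (V (s l)) ≤ ‖V (s N) - V (s m)‖ + ‖V (s N) - V (s l)‖ := by
            rw [← dist_eq_norm, ← dist_eq_norm]; exact dist_triangle_left _ _ _
        _ ≤ 2 * (B * s N ^ α) := by
            linarith [h _ _ (hs0 m) (hanti hm) (hsR N), h _ _ (hs0 l) (hanti hl) (hsR N)]
    · simpa [Real.zero_rpow hα.ne'] using
        ((hlim.rpow_const (Or.inr hα.le)).const_mul B).const_mul 2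
  obtain ⟨G, hG⟩ := cauchySeq_tendsto_of_complete hcauchy
  refine ⟨G, fun r hr => le_of_tendsto (tendsto_const_nhds.sub hG).norm ?_⟩
  filter_upwards [hlim.eventually (gt_mem_nhds hr.1)] with k hk
  exact h r (s k) (hs0 k) hk.le hr.2

end Scales

section Parabolic

variable {E : Type*} [NormedAddCommGroup E] [InnerProductSpace ℝ E]

def IsFirstOrderApprox (u : E × ℝ → ℝ) (z₀ : E × ℝ) (r h ε : ℝ) (V : E) : Prop :=
  ∀ z : E × ℝ, ‖z.1 - z₀.1‖ ≤ r → z₀.2 - h ≤ z.2 → z.2 ≤ z₀.2 →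
    |u z - u z₀ - ⟪V, z.1 - z₀.1⟫| ≤ ε

variable {u : E × ℝ → ℝ} {z w : E × ℝ} {V W : E}

theorem IsFirstOrderApprox.mul_norm_sub_le {r h ε r' h' ε' ρ : ℝ}
    (hV : IsFirstOrderApprox u z r h ε V) (hW : IsFirstOrderApprox u w r' h' ε' W)
    (hwz : w.2 ≤ z.2) (hzw : z.2 - h ≤ w.2) (hh' : 0 ≤ h') (hρ : 0 ≤ ρ)
    (hρr : ρ + ‖w.1 - z.1‖ ≤ r) (hρr' : ρ ≤ r') :
    ρ * ‖V - W‖ ≤ 2 * ε + ε' := by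
  have hw := hV w (by linarith) hzw hwz
  have hε : 0 ≤ ε := (abs_nonneg _).trans hw
  have hε' : 0 ≤ ε' := (abs_nonneg _).trans (hW w (by simpa using hρ.trans hρr')
    (by linarith) le_rfl)
  refine mul_norm_le_of_forall_norm_eq (V - W) hρ (by positivity) fun e he => ?_
  have h₁ := hV (w.1 + e, w.2) (by
    calc ‖w.1 + e - z.1‖ = ‖e + (w.1 - z.1)‖ := by rw [add_sub_right_comm, add_comm]
      _ ≤ ‖e‖ + ‖w.1 - z.1‖ := norm_add_le _ _
      _ ≤ r := by rw [he]; exact hρr) hzw hwz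
  have h₂ := hW (w.1 + e, w.2) (by simpa [he] using hρr') (by linarith) le_rfl
  -- both `⟪V, e⟫` and `⟪W, e⟫` approximate `u (w.1 + e, w.2) - u w`
  have hsplit : ⟪V, w.1 + e - z.1⟫ = ⟪V, e⟫ + ⟪V, w.1 - z.1⟫ := by
    rw [add_sub_right_comm, add_comm, inner_add_right]
  simp only [add_sub_cancel_left] at h₂
  rw [hsplit] at h₁
  rw [inner_sub_left, abs_le]
  constructor <;> linarith [abs_le.mp h₁, abs_le.mp h₂, abs_le.mp hw]

theorem IsFirstOrderApprox.norm_sub_le {C α θ r s : ℝ} (hC : 0 ≤ C) (hα : 0 ≤ α)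
    (hV : IsFirstOrderApprox u z r (r ^ θ) (C * r ^ (1 + α)) V)
    (hW : IsFirstOrderApprox u w s (s ^ θ) (C * s ^ (1 + α)) W)
    (hs : 0 < s) (hsr : s ≤ r) (hr : r ≤ 2 * s) (hwz : w.2 ≤ z.2) (hzw : z.2 - r ^ θ ≤ w.2)
    (hd : ‖w.1 - z.1‖ ≤ r - s) :
    ‖V - W‖ ≤ 6 * C * r ^ α := by
  have hr0 : 0 < r := hs.trans_le hsr
  have key := hV.mul_norm_sub_le hW hwz hzw (by positivity) hs.le (by linarith) le_rfl
  have hsr' : s ^ (1 + α) ≤ r ^ (1 + α) := Real.rpow_le_rpow hs.le hsr (by linarith)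
  rw [Real.rpow_add hr0, Real.rpow_one] at hsr' key
  have hCr : 0 ≤ C * r ^ α := by positivity
  refine le_of_mul_le_mul_left ?_ hs
  nlinarith [mul_le_mul_of_nonneg_right hr hCr, mul_le_mul_of_nonneg_left hsr' hC]

theorem exists_norm_sub_le_of_isFirstOrderApprox [CompleteSpace E] {C α θ R : ℝ} {V : ℝ → E}
    (hC : 0 ≤ C) (hα : 0 < α) (hR : 0 < R)
    (hV : ∀ r ∈ Ioc 0 R, IsFirstOrderApprox u z r (r ^ θ) (C * r ^ (1 + α)) (V r)) :
    ∃ G, ∀ r ∈ Ioc 0 R, ‖V r - G‖ ≤ 6 * C / (1 - (1 / 2 : ℝ) ^ α) * r ^ α := by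
  have hdyadic : ∀ r s, 0 < s → s ≤ r → r ≤ 2 * s → r ≤ R → ‖V r - V s‖ ≤ 6 * C * r ^ α :=
    fun r s hs hsr hr2 hr => (hV r ⟨hs.trans_le hsr, hr⟩).norm_sub_le hC hα.le
      (hV s ⟨hs, hsr.trans hr⟩) hs hsr hr2 le_rfl
      (sub_le_self _ (Real.rpow_nonneg (hs.trans_le hsr).le θ)) (by simpa using hsr)
  exact exists_norm_sub_le_of_norm_sub_le hα hR fun r s hs hsr hr =>
    (norm_sub_le_of_norm_sub_le_of_le_two_mul hα (by positivity) hdyadic hs hsr hr).trans_eq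
      (by ring)

theorem hasGradientAt_of_isFirstOrderApprox [CompleteSpace E] {G : E} {C B α θ R : ℝ}
    {V : ℝ → E} (hα : 0 < α) (hR : 0 < R)
    (hV : ∀ r ∈ Ioc 0 R, IsFirstOrderApprox u z r (r ^ θ) (C * r ^ (1 + α)) (V r))
    (hG : ∀ r ∈ Ioc 0 R, ‖V r - G‖ ≤ B * r ^ α) :
    HasGradientAt (fun x => u (x, z.2)) G z.1 :=
  hasGradientAt_of_forall_approx hα hR (fun r hr x hx =>
    hV r hr (x, z.2) hx (sub_le_self _ (Real.rpow_nonneg hr.1.le θ)) le_rfl) hG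

end Parabolic

theorem norm_sub_le_of_forall_step {X F : Type*} [AddCommGroup X] [Module ℝ X]
    [SeminormedAddCommGroup F] {s : Set X} (hs : Convex ℝ s) {g : X → F} {x y : X}
    (hx : x ∈ s) (hy : y ∈ s) {N : ℕ} (hN : 0 < N) {M : ℝ}
    (h : ∀ a ∈ s, ∀ b ∈ s, b - a = (N : ℝ)⁻¹ • (y - x) → ‖g a - g b‖ ≤ M) :
    ‖g x - g y‖ ≤ N * M := by
  set p : ℕ → X := fun i => x + ((i : ℝ) / N) • (y - x)
  have hN : (0 : ℝ) < N := Nat.cast_pos.mpr hN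
  have hp : ∀ i ≤ N, p i ∈ s := fun i hi =>
    hs.add_smul_sub_mem hx hy ⟨by positivity, div_le_one_of_le₀ (by exact_mod_cast hi) hN.le⟩
  have hstep : ∀ i, p (i + 1) - p i = (N : ℝ)⁻¹ • (y - x) := fun i => by
    simp only [p, add_sub_add_left_eq_sub, ← sub_smul]
    congr 1
    push_cast
    ring
  calc ‖g x - g y‖ = dist (g (p 0)) (g (p N)) := by
        simp [p, hN.ne', dist_eq_norm]
    _ ≤ ∑ i ∈ Finset.range N, dist (g (p i)) (g (p (i + 1))) :=
        dist_le_range_sum_dist (fun i => g (p i)) N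
    _ ≤ ∑ _i ∈ Finset.range N, M := Finset.sum_le_sum fun i hi => by
        have hi := Finset.mem_range.mp hi
        rw [dist_eq_norm]
        exact h _ (hp i hi.le) _ (hp (i + 1) hi) (hstep i)
    _ = N * M := by simp

section Cylinder

theorem convex_hCyl (n : ℕ) (r s : ℝ) : Convex ℝ (hCyl n r s) := by
  have : hCyl n r s = Metric.ball 0 r ×ˢ Ioc (-s) 0 := by
    ext z; simp [hCyl]
  rw [this]
  exact (convex_ball 0 r).prod (convex_Ioc _ _)

variable {n : ℕ} {F : Type*} [SeminormedAddCommGroup F]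

def LocalParabolicHolder (g : En n × ℝ → F) (M α θ : ℝ) : Prop :=
  ∀ z ∈ hCyl n (1/4) (1/16), ∀ w ∈ hCyl n (1/4) (1/16), ∀ r ∈ Ioc (0 : ℝ) (1/4),
    w.2 ≤ z.2 → z.2 - w.2 ≤ r ^ θ → ‖z.1 - w.1‖ ≤ r / 2 → ‖g z - g w‖ ≤ M * r ^ α

variable {g : En n × ℝ → F} {M α θ : ℝ} {z w : En n × ℝ}

theorem LocalParabolicHolder.norm_sub_le_of_near (hg : LocalParabolicHolder g M α θ)
    (hα : α ∈ Ioc 0 1) (hθ : 0 < θ) (hM : 0 ≤ M) (hz : z ∈ hCyl n (1/4) (1/16))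
    (hw : w ∈ hCyl n (1/4) (1/16)) (hwz : w.2 ≤ z.2) (hd : ‖z.1 - w.1‖ ≤ 1/8)
    (hτ : z.2 - w.2 ≤ (1/4) ^ θ) :
    ‖g z - g w‖ ≤ 2 * M * (‖z.1 - w.1‖ ^ α + (z.2 - w.2) ^ (α / θ)) := by
  rcases eq_or_ne z w with rfl | hne
  · simp only [sub_self, norm_zero]
    positivity
  set d := ‖z.1 - w.1‖
  set τ := z.2 - w.2
  have hτ0 : 0 ≤ τ := sub_nonneg.mpr hwz
  set r := max (2 * d) (τ ^ θ⁻¹)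
  have hr0 : 0 < r := by
    rcases (norm_nonneg (z.1 - w.1)).eq_or_lt with hd0 | hd0
    · refine lt_max_of_lt_right (Real.rpow_pos_of_pos (hτ0.lt_of_ne fun hτ => hne ?_) _)
      exact Prod.ext (sub_eq_zero.mp (norm_eq_zero.mp hd0.symm)) (by linarith)
    · exact lt_max_of_lt_left (by linarith)
  have hr : r ≤ 1/4 := by
    refine max_le (by linarith) ?_
    calc τ ^ θ⁻¹ ≤ ((1/4) ^ θ) ^ θ⁻¹ := by gcongr
      _ = 1/4 := Real.rpow_rpow_inv (by norm_num) hθ.ne'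
  have htime : τ ≤ r ^ θ :=
    calc τ = (τ ^ θ⁻¹) ^ θ := (Real.rpow_inv_rpow hτ0 hθ.ne').symm
      _ ≤ r ^ θ := by gcongr; exact le_max_right _ _
  have hrα : r ^ α ≤ 2 * d ^ α + τ ^ (α / θ) := by
    have h2d : (2 * d) ^ α ≤ 2 * d ^ α := by
      rw [Real.mul_rpow (by norm_num) (norm_nonneg _)]
      gcongr
      simpa using Real.rpow_le_rpow_of_exponent_le (by norm_num : (1 : ℝ) ≤ 2) hα.2
    have hτα : (τ ^ θ⁻¹) ^ α = τ ^ (α / θ) := by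
      rw [← Real.rpow_mul hτ0, inv_mul_eq_div]
    have : 0 ≤ d ^ α := by positivity
    have : 0 ≤ τ ^ (α / θ) := by positivity
    rcases le_total (2 * d) (τ ^ θ⁻¹) with h | h
    · rw [show r = τ ^ θ⁻¹ from max_eq_right h, hτα]; linarith
    · rw [show r = 2 * d from max_eq_left h]; linarith
  calc ‖g z - g w‖ ≤ M * r ^ α :=
        hg z hz w hw r ⟨hr0, hr⟩ hwz htime (by linarith [le_max_left (2 * d) (τ ^ θ⁻¹)])
    _ ≤ M * (2 * (d ^ α + τ ^ (α / θ))) := by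
        gcongr
        linarith [show 0 ≤ τ ^ (α / θ) by positivity]
    _ = 2 * M * (d ^ α + τ ^ (α / θ)) := by ring

theorem LocalParabolicHolder.norm_sub_le_of_far (hg : LocalParabolicHolder g M α θ)
    (hα : 0 ≤ α) (hθ : 1 ≤ θ) (hM : 0 ≤ M) (hz : z ∈ hCyl n (1/4) (1/16))
    (hw : w ∈ hCyl n (1/4) (1/16)) (hwz : w.2 ≤ z.2) :
    ‖g z - g w‖ ≤ ⌈(4 : ℝ) ^ θ⌉₊ * M := by
  set N := ⌈(4 : ℝ) ^ θ⌉₊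
  have hN : (4 : ℝ) ^ θ ≤ N := Nat.le_ceil _
  have hN4 : (4 : ℝ) ≤ N := le_trans
    (by simpa using Real.rpow_le_rpow_of_exponent_le (by norm_num : (1 : ℝ) ≤ 4) hθ) hN
  have hNpos : 0 < N := by exact_mod_cast (by linarith : (0 : ℝ) < N)
  obtain ⟨hz1, -, hz3⟩ := id hz
  obtain ⟨hw1, hw2, -⟩ := id hw
  refine norm_sub_le_of_forall_step (convex_hCyl n _ _) hz hw hNpos fun a ha b hb hab => ?_
  have h₁ : b.1 - a.1 = (N : ℝ)⁻¹ • (w.1 - z.1) := congrArg Prod.fst hab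
  have h₂ : b.2 - a.2 = (N : ℝ)⁻¹ * (w.2 - z.2) := congrArg Prod.snd hab
  have hNinv : (N : ℝ)⁻¹ ≤ (1/4) ^ θ := by
    rw [Real.div_rpow (by norm_num) (by norm_num), Real.one_rpow, one_div]
    exact inv_anti₀ (by positivity) hN
  have hstep := hg a ha b hb (1/4) ⟨by norm_num, le_rfl⟩ ?_ ?_ ?_
  · exact hstep.trans (mul_le_of_le_one_right hM (Real.rpow_le_one (by norm_num) (by norm_num) hα))
  · nlinarith [inv_pos.mpr (by linarith : (0 : ℝ) < N)]
  · have : (N : ℝ)⁻¹ * (z.2 - w.2) ≤ (N : ℝ)⁻¹ :=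
      mul_le_of_le_one_right (by positivity) (by linarith)
    linarith
  · rw [norm_sub_rev, h₁, norm_smul, norm_inv, Real.norm_natCast]
    have : ‖w.1 - z.1‖ ≤ 1/2 := (norm_sub_le _ _).trans (by linarith)
    calc (N : ℝ)⁻¹ * ‖w.1 - z.1‖ ≤ 4⁻¹ * (1/2) := by gcongr
      _ ≤ 1/4 / 2 := by norm_num

theorem LocalParabolicHolder.norm_sub_le (hg : LocalParabolicHolder g M α θ)
    (hα : α ∈ Ioc 0 1) (hθ : 1 ≤ θ) (hM : 0 ≤ M) (hz : z ∈ hCyl n (1/4) (1/16))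
    (hw : w ∈ hCyl n (1/4) (1/16)) :
    ‖g z - g w‖ ≤ (2 + 8 * ⌈(4 : ℝ) ^ θ⌉₊) * M * (‖z.1 - w.1‖ ^ α + |z.2 - w.2| ^ (α / θ)) := by
  wlog hwz : w.2 ≤ z.2 generalizing z w
  · have := this hw hz (le_of_not_ge hwz)
    rwa [norm_sub_rev, norm_sub_rev w.1, abs_sub_comm] at this
  rw [abs_of_nonneg (sub_nonneg.mpr hwz)]
  set N : ℝ := (⌈(4 : ℝ) ^ θ⌉₊ : ℝ)
  have hN : 0 ≤ N := Nat.cast_nonneg _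
  have hsum : 0 ≤ ‖z.1 - w.1‖ ^ α + (z.2 - w.2) ^ (α / θ) := by positivity
  by_cases hnear : ‖z.1 - w.1‖ ≤ 1/8 ∧ z.2 - w.2 ≤ (1/4) ^ θ
  · calc ‖g z - g w‖ ≤ 2 * M * (‖z.1 - w.1‖ ^ α + (z.2 - w.2) ^ (α / θ)) :=
          hg.norm_sub_le_of_near hα (by linarith) hM hz hw hwz hnear.1 hnear.2
      _ ≤ _ := by gcongr; linarith
  -- far apart points: the right-hand side is bounded below by a constant
  have hlow : 1/8 ≤ ‖z.1 - w.1‖ ^ α + (z.2 - w.2) ^ (α / θ) := by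
    rcases not_and_or.mp hnear with hd | hτ
    · have : (1/8 : ℝ) ≤ ‖z.1 - w.1‖ ^ α :=
        calc (1/8 : ℝ) = (1/8) ^ (1 : ℝ) := (Real.rpow_one _).symm
          _ ≤ (1/8) ^ α := Real.rpow_le_rpow_of_exponent_ge (by norm_num) (by norm_num) hα.2
          _ ≤ ‖z.1 - w.1‖ ^ α := Real.rpow_le_rpow (by norm_num) (not_le.mp hd).le hα.1.le
      linarith [show 0 ≤ (z.2 - w.2) ^ (α / θ) by positivity]
    · have : (1/4 : ℝ) ≤ (z.2 - w.2) ^ (α / θ) :=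
        calc (1/4 : ℝ) = (1/4) ^ (1 : ℝ) := (Real.rpow_one _).symm
          _ ≤ (1/4) ^ α := Real.rpow_le_rpow_of_exponent_ge (by norm_num) (by norm_num) hα.2
          _ = ((1/4) ^ θ) ^ (α / θ) := by
              rw [← Real.rpow_mul (by norm_num), mul_div_cancel₀ _ (by linarith)]
          _ ≤ (z.2 - w.2) ^ (α / θ) := by
              gcongr
              · exact div_nonneg hα.1.le (by linarith)
              · linarith
      linarith [show 0 ≤ ‖z.1 - w.1‖ ^ α by positivity]
  calc ‖g z - g w‖ ≤ N * M := hg.norm_sub_le_of_far hα.1.le hθ hM hz hw hwz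
    _ = 8 * N * M * (1/8) := by ring
    _ ≤ (2 + 8 * N) * M * (‖z.1 - w.1‖ ^ α + (z.2 - w.2) ^ (α / θ)) := by
        gcongr
        linarith

theorem localParabolicHolder_of_isFirstOrderApprox {u : En n × ℝ → ℝ}
    {V : En n × ℝ → ℝ → En n} {Du : En n × ℝ → En n} {C K : ℝ} (hC : 0 ≤ C) (hK : 0 ≤ K)
    (hα : 0 ≤ α)
    (hV : ∀ z ∈ hCyl n (1/4) (1/16), ∀ r ∈ Ioc (0 : ℝ) (1/4),
      IsFirstOrderApprox u z r (r ^ θ) (C * r ^ (1 + α)) (V z r))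
    (hDu : ∀ z ∈ hCyl n (1/4) (1/16), ∀ r ∈ Ioc (0 : ℝ) (1/4), ‖V z r - Du z‖ ≤ K * r ^ α) :
    LocalParabolicHolder Du (2 * K + 6 * C) α θ := by
  intro z hz w hw r ⟨hr0, hr⟩ hwz hτ hd
  have h₁ := hDu z hz r ⟨hr0, hr⟩
  have h₂ := (hV z hz r ⟨hr0, hr⟩).norm_sub_le hC hα (hV w hw (r / 2) ⟨by linarith, by linarith⟩)
    (by linarith) (by linarith) (by linarith) hwz (by linarith)
    (by rw [norm_sub_rev]; linarith)
  have h₃ := hDu w hw (r / 2) ⟨by linarith, by linarith⟩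
  have hhalf : K * (r / 2) ^ α ≤ K * r ^ α :=
    mul_le_mul_of_nonneg_left (Real.rpow_le_rpow (by linarith) (by linarith) hα) hK
  calc ‖Du z - Du w‖ = ‖-(V z r - Du z) + (V z r - V w (r / 2)) + (V w (r / 2) - Du w)‖ := by
        congr 1; abel
    _ ≤ ‖V z r - Du z‖ + ‖V z r - V w (r / 2)‖ + ‖V w (r / 2) - Du w‖ :=
        (norm_add₃_le ..).trans_eq (by rw [norm_neg])
    _ ≤ (2 * K + 6 * C) * r ^ α := by linarith

end Cylinder

theorem holder_gradient_characterization_general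
    (n : ℕ) (α θ C : ℝ)
    (hα : α ∈ Set.Ioo (0 : ℝ) 1) (hθ : 2 ≤ θ) (hC : 0 < C)
    (u : En n × ℝ → ℝ)
    (happ : ∀ z₀ ∈ hCyl n (1/4) (1/16), ∀ r ∈ Set.Ioc (0 : ℝ) (1/4),
      ∃ V : En n, ∀ z : En n × ℝ,
        ‖z.1 - z₀.1‖ ≤ r → z₀.2 - r ^ θ ≤ z.2 → z.2 ≤ z₀.2 →
        |u z - u z₀ - ⟪V, z.1 - z₀.1⟫| ≤ C * r ^ (1 + α)) :
    ∃ Du : En n × ℝ → En n,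
      (∀ z ∈ hCyl n (1/4) (1/16), HasGradientAt (fun x => u (x, z.2)) (Du z) z.1) ∧
      ∃ C' : ℝ, 0 < C' ∧
        ∀ z ∈ hCyl n (1/4) (1/16), ∀ w ∈ hCyl n (1/4) (1/16),
          ‖Du z - Du w‖ ≤ C' * (‖z.1 - w.1‖ ^ α + |z.2 - w.2| ^ (α / θ)) := by
  obtain ⟨hα0, hα1⟩ := hα
  choose! V hV using happ
  set K := 6 * C / (1 - (1 / 2 : ℝ) ^ α)
  have hK : 0 < K :=
    div_pos (by positivity) (sub_pos.mpr (Real.rpow_lt_one (by norm_num) (by norm_num) hα0))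
  have hlim : ∀ z ∈ hCyl n (1/4) (1/16), ∃ G, ∀ r ∈ Ioc (0 : ℝ) (1/4), ‖V z r - G‖ ≤ K * r ^ α :=
    fun z hz => exists_norm_sub_le_of_isFirstOrderApprox hC.le hα0 (by norm_num) (hV z hz)
  choose! Du hDu using hlim
  have hloc : LocalParabolicHolder Du (2 * K + 6 * C) α θ :=
    localParabolicHolder_of_isFirstOrderApprox hC.le hK.le hα0.le hV hDu
  refine ⟨Du, fun z hz => hasGradientAt_of_isFirstOrderApprox hα0 (by norm_num) (hV z hz)
    (hDu z hz), (2 + 8 * ⌈(4 : ℝ) ^ θ⌉₊) * (2 * K + 6 * C), by positivity, fun z hz w hw => ?_⟩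
  exact hloc.norm_sub_le ⟨hα0, hα1.le⟩ (by linarith) (by positivity) hz hw

/-- **Characterization of functions with Hölder continuous spatial gradient.** If a continuous
`u : B_{1/2} × (-1/4, 0] → ℝ` admits at every `(x₀,t₀) ∈ B_{1/4} × (-1/16, 0]` and every
scale `r ∈ (0, 1/4]` a first-order approximation
`|u(x,t) - u(x₀,t₀) - V·(x-x₀)| ≤ C r^{1+α}` for `|x-x₀| ≤ r`, `t₀ - r^θ ≤ t ≤ t₀`, then `u`
is spatially differentiable on `B_{1/4} × (-1/16, 0]` and its spatial gradient satisfies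
`|Du(x,t) - Du(y,s)| ≤ C'(|x-y|^α + |t-s|^{α/θ})` there, with `C' = C'(n,α,θ,C) > 0`. -/
theorem holder_gradient_characterization
    (n : ℕ) (hn : 1 ≤ n) (α θ C : ℝ)
    (hα : α ∈ Set.Ioo (0 : ℝ) 1) (hθ : 2 ≤ θ) (hC : 0 < C)
    (u : En n × ℝ → ℝ)
    (hu : ContinuousOn u (hCyl n (1/2) (1/4)))
    (happ : ∀ z₀ ∈ hCyl n (1/4) (1/16), ∀ r ∈ Set.Ioc (0 : ℝ) (1/4),
      ∃ V : En n, ∀ z : En n × ℝ,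
        ‖z.1 - z₀.1‖ ≤ r → z₀.2 - r ^ θ ≤ z.2 → z.2 ≤ z₀.2 →
        |u z - u z₀ - ⟪V, z.1 - z₀.1⟫| ≤ C * r ^ (1 + α)) :
    ∃ Du : En n × ℝ → En n,
      (∀ z ∈ hCyl n (1/4) (1/16), HasGradientAt (fun x => u (x, z.2)) (Du z) z.1) ∧
      ∃ C' : ℝ, 0 < C' ∧
        ∀ z ∈ hCyl n (1/4) (1/16), ∀ w ∈ hCyl n (1/4) (1/16),
          ‖Du z - Du w‖ ≤ C' * (‖z.1 - w.1‖ ^ α + |z.2 - w.2| ^ (α / θ)) :=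
  holder_gradient_characterization_general n α θ C hα hθ hC u happ
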